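/- arXiv:1305.2471 — 8 statements merged into one kernel-verified Lean document; each statement's English description precedes it below -/
import Mathlib

section
/- (Löwner–Heinz inequality) If A and B are n×n positive semidefinite complex matrices with A ≥ B, then for every r ∈ [0,1], A^r ≥ B^r, where the powers are defined by functional calculus on the spectrum. -/
open Matrix
open scoped ComplexOrder

theorem loewner_heinz {n : ℕ} (A B : Matrix (Fin n) (Fin n) ℂ)
    (hA : A.PosSemidef) (hB : B.PosSemidef) (hAB : (A - B).PosSemidef)
    (r : ℝ) (hr : r ∈ Set.Icc (0:ℝ) 1) :
    (hA.isHermitian.cfc (fun t => t ^ r) - hB.isHermitian.cfc (fun t => t ^ r)).PosSemidef := by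
  -- With the L² operator norm, complex matrices form a C⋆-algebra whose positive cone is the
  -- Loewner order, so this is operator monotonicity of `a ↦ a ^ r` in a C⋆-algebra.
  open scoped MatrixOrder Matrix.Norms.L2Operator in
  rw [← hA.isHermitian.cfc_eq, ← hB.isHermitian.cfc_eq,
    ← CFC.rpow_eq_cfc_real hA.nonneg, ← CFC.rpow_eq_cfc_real hB.nonneg]
  exact CFC.rpow_le_rpow hr (le_iff.mpr hAB)
end

section
/- Let f : [0,α) → ℝ be a function satisfying the transformer inequality f(X*AX) ≤ X* f(A) X for all Hermitian A with spectrum in [0,α) and all contractions X (over all matrix sizes). Then for all positive definite matrices A ≥ B > 0 with spectra in (0,α), one has A⁻¹ f(A) ≥ B⁻¹ f(B); i.e., t ↦ f(t)/t is operator monotone on (0,α). -/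
/-!
With `X = A^{-1/2} B^{1/2}` one has `Xᴴ A X = B`, and `B ≤ A` makes `X` a contraction. The
transformer inequality then gives `f(B) ≤ B^{1/2} A^{-1/2} f(A) A^{-1/2} B^{1/2}
= B^{1/2} (A⁻¹ f(A)) B^{1/2}`, and congruence by `B^{-1/2}` turns this into
`B⁻¹ f(B) ≤ A⁻¹ f(A)`.
-/

open Matrix
open scoped ComplexOrder MatrixOrder Matrix.Norms.L2Operator

theorem CStarAlgebra.star_mul_self_le_one_iff {A : Type*} [CStarAlgebra A] [PartialOrder A]
    [StarOrderedRing A] {x : A} : star x * x ≤ 1 ↔ x * star x ≤ 1 := by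
  rw [← CStarAlgebra.norm_le_one_iff_of_nonneg _ (star_mul_self_nonneg x),
    ← CStarAlgebra.norm_le_one_iff_of_nonneg _ (mul_star_self_nonneg x),
    CStarRing.norm_star_mul_self, CStarRing.norm_self_mul_star]

namespace Matrix

variable {n 𝕜 : Type*} [Fintype n] [DecidableEq n] [RCLike 𝕜]

theorem cfc_mul_cfc (A : Matrix n n 𝕜) (u v : ℝ → ℝ) :
    cfc u A * cfc v A = cfc (fun t => u t * v t) A :=
  (cfc_mul u v A (A.finite_real_spectrum.continuousOn u)
    (A.finite_real_spectrum.continuousOn v)).symm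

theorem cfc_invSqrt_mul_cfc_mul_cfc_invSqrt {A : Matrix n n 𝕜}
    (hpos : ∀ t ∈ spectrum ℝ A, 0 < t) (h : ℝ → ℝ) :
    cfc (fun t => (√t)⁻¹) A * cfc h A * cfc (fun t => (√t)⁻¹) A
      = cfc (fun t => h t / t) A := by
  rw [cfc_mul_cfc, cfc_mul_cfc]
  refine cfc_congr fun t ht => ?_
  have : (√t)⁻¹ * (√t)⁻¹ = t⁻¹ := by
    rw [← mul_inv, Real.mul_self_sqrt (hpos t ht).le]
  simp only [div_eq_mul_inv, ← this]
  ring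

theorem cfc_invSqrt_mul_self_mul_cfc_invSqrt {A : Matrix n n 𝕜} (hA : IsSelfAdjoint A)
    (hpos : ∀ t ∈ spectrum ℝ A, 0 < t) :
    cfc (fun t => (√t)⁻¹) A * A * cfc (fun t => (√t)⁻¹) A = 1 := by
  have := cfc_invSqrt_mul_cfc_mul_cfc_invSqrt hpos (fun t => t)
  rw [cfc_id' ℝ A hA] at this
  rw [this, ← cfc_one ℝ A hA]
  exact cfc_congr fun t ht => div_self (hpos t ht).ne'

theorem cfc_sqrt_mul_cfc_sqrt {A : Matrix n n 𝕜} (hA : IsSelfAdjoint A)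
    (hnonneg : ∀ t ∈ spectrum ℝ A, 0 ≤ t) : cfc Real.sqrt A * cfc Real.sqrt A = A := by
  conv_rhs => rw [← cfc_id' ℝ A hA]
  rw [cfc_mul_cfc]
  exact cfc_congr fun t ht => Real.mul_self_sqrt (hnonneg t ht)

theorem cfc_invSqrt_mul_cfc_sqrt_conj {A : Matrix n n 𝕜} (hA : IsSelfAdjoint A)
    (hpos : ∀ t ∈ spectrum ℝ A, 0 < t) (M : Matrix n n 𝕜) :
    cfc (fun t => (√t)⁻¹) A * (cfc Real.sqrt A * M * cfc Real.sqrt A)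
      * cfc (fun t => (√t)⁻¹) A = M := by
  have hone : cfc (fun t => (√t)⁻¹) A * cfc Real.sqrt A = 1 := by
    rw [cfc_mul_cfc, ← cfc_one ℝ A hA]
    exact cfc_congr fun t ht => inv_mul_cancel₀ (Real.sqrt_pos.2 (hpos t ht)).ne'
  have hone' : cfc Real.sqrt A * cfc (fun t => (√t)⁻¹) A = 1 :=
    (cfc_commute_cfc Real.sqrt (fun t => (√t)⁻¹) A).eq ▸ hone
  rw [← mul_assoc, ← mul_assoc, hone, one_mul, mul_assoc, hone', mul_one]

noncomputable def invSqrtMulSqrt (A B : Matrix n n 𝕜) : Matrix n n 𝕜 :=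
  cfc (fun t => (√t)⁻¹) A * cfc Real.sqrt B

theorem star_invSqrtMulSqrt (A B : Matrix n n 𝕜) :
    star (invSqrtMulSqrt A B) = cfc Real.sqrt B * cfc (fun t => (√t)⁻¹) A := by
  rw [invSqrtMulSqrt, star_mul, (cfc_predicate _ B : IsSelfAdjoint _).star_eq,
    (cfc_predicate _ A : IsSelfAdjoint _).star_eq]

theorem star_invSqrtMulSqrt_mul_cfc_mul {A : Matrix n n 𝕜} (hA : ∀ t ∈ spectrum ℝ A, 0 < t)
    (B : Matrix n n 𝕜) (h : ℝ → ℝ) :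
    star (invSqrtMulSqrt A B) * cfc h A * invSqrtMulSqrt A B
      = cfc Real.sqrt B * cfc (fun t => h t / t) A * cfc Real.sqrt B := by
  rw [star_invSqrtMulSqrt, invSqrtMulSqrt, ← cfc_invSqrt_mul_cfc_mul_cfc_invSqrt hA]
  simp only [mul_assoc]

theorem star_invSqrtMulSqrt_mul_mul_invSqrtMulSqrt {A B : Matrix n n 𝕜} (hA : IsSelfAdjoint A)
    (hApos : ∀ t ∈ spectrum ℝ A, 0 < t) (hB : IsSelfAdjoint B)
    (hBpos : ∀ t ∈ spectrum ℝ B, 0 < t) :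
    star (invSqrtMulSqrt A B) * A * invSqrtMulSqrt A B = B := by
  rw [star_invSqrtMulSqrt, invSqrtMulSqrt,
    show ∀ a b c d e : Matrix n n 𝕜, a * b * c * (d * e) = a * (b * c * d) * e by
      simp [mul_assoc],
    cfc_invSqrt_mul_self_mul_cfc_invSqrt hA hApos, mul_one,
    cfc_sqrt_mul_cfc_sqrt hB fun t ht => (hBpos t ht).le]

/-- `X Xᴴ = A^{-1/2} B A^{-1/2} ≤ A^{-1/2} A A^{-1/2} = 1` for `X = A^{-1/2} B^{1/2}`, and the
C⋆-identity `‖Xᴴ X‖ = ‖X Xᴴ‖` transfers this to `Xᴴ X`. -/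
theorem star_invSqrtMulSqrt_mul_self_le_one {A B : Matrix n n ℂ} (hA : IsSelfAdjoint A)
    (hApos : ∀ t ∈ spectrum ℝ A, 0 < t) (hB : IsSelfAdjoint B)
    (hBpos : ∀ t ∈ spectrum ℝ B, 0 < t) (hBA : B ≤ A) :
    star (invSqrtMulSqrt A B) * invSqrtMulSqrt A B ≤ 1 := by
  rw [CStarAlgebra.star_mul_self_le_one_iff, star_invSqrtMulSqrt, invSqrtMulSqrt,
    ← cfc_invSqrt_mul_self_mul_cfc_invSqrt hA hApos,
    show ∀ a b c d : Matrix n n ℂ, a * b * (c * d) = a * (b * c) * d by simp [mul_assoc],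
    cfc_sqrt_mul_cfc_sqrt hB fun t ht => (hBpos t ht).le]
  exact (cfc_predicate _ A : IsSelfAdjoint _).conjugate_le_conjugate hBA

end Matrix

theorem div_operator_monotone_of_transformer_general (α : ℝ) (f : ℝ → ℝ)
    (htrans : ∀ (n : ℕ) (A : Matrix (Fin n) (Fin n) ℂ) (hA : A.IsHermitian),
      spectrum ℝ A ⊆ Set.Ico 0 α →
      ∀ (X : Matrix (Fin n) (Fin n) ℂ), (1 - Xᴴ * X).PosSemidef →
      ∀ (hXAX : (Xᴴ * A * X).IsHermitian),
        (Xᴴ * hA.cfc f * X - hXAX.cfc f).PosSemidef) :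
    ∀ (n : ℕ) (A B : Matrix (Fin n) (Fin n) ℂ) (hA : A.PosDef) (hB : B.PosDef),
      spectrum ℝ A ⊆ Set.Ioo 0 α → spectrum ℝ B ⊆ Set.Ioo 0 α →
      (A - B).PosSemidef →
      (hA.isHermitian.cfc (fun t => f t / t) - hB.isHermitian.cfc (fun t => f t / t)).PosSemidef := by
  intro n A B hA hB sA sB hBA
  have hApos : ∀ t ∈ spectrum ℝ A, 0 < t := fun t ht => (sA ht).1
  have hBpos : ∀ t ∈ spectrum ℝ B, 0 < t := fun t ht => (sB ht).1
  rw [← le_iff] at hBA ⊢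
  rw [← hA.isHermitian.cfc_eq, ← hB.isHermitian.cfc_eq]
  set X := invSqrtMulSqrt A B
  have hXAX : star X * A * X = B :=
    star_invSqrtMulSqrt_mul_mul_invSqrtMulSqrt hA.isHermitian hApos hB.isHermitian hBpos
  have hfB : cfc f B ≤ star X * cfc f A * X := by
    have := htrans n A hA.isHermitian (sA.trans Set.Ioo_subset_Ico_self) X
      (le_iff.1 <| star_invSqrtMulSqrt_mul_self_le_one hA.isHermitian hApos hB.isHermitian
        hBpos hBA)
      (hXAX ▸ hB.isHermitian)
    rwa [← le_iff, ← IsHermitian.cfc_eq, ← IsHermitian.cfc_eq, ← star_eq_conjTranspose,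
      hXAX] at this
  calc cfc (fun t => f t / t) B
      = cfc (fun t => (√t)⁻¹) B * cfc f B * cfc (fun t => (√t)⁻¹) B :=
        (cfc_invSqrt_mul_cfc_mul_cfc_invSqrt hBpos f).symm
    _ ≤ cfc (fun t => (√t)⁻¹) B * (star X * cfc f A * X) * cfc (fun t => (√t)⁻¹) B :=
        (cfc_predicate _ B : IsSelfAdjoint _).conjugate_le_conjugate hfB
    _ = cfc (fun t => f t / t) A := by
        rw [star_invSqrtMulSqrt_mul_cfc_mul hApos,
          cfc_invSqrt_mul_cfc_sqrt_conj hB.isHermitian hBpos]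

/-- If `f` satisfies the transformer inequality `f(XᴴAX) ≤ Xᴴ f(A) X` for all Hermitian `A`
with spectrum in `[0, α)` and all contractions `X` (over all matrix sizes), then
`t ↦ f(t)/t` is operator monotone on `(0, α)`. -/
theorem div_operator_monotone_of_transformer (α : ℝ) (hα : 0 < α) (f : ℝ → ℝ)
    (htrans : ∀ (n : ℕ) (A : Matrix (Fin n) (Fin n) ℂ) (hA : A.IsHermitian),
      spectrum ℝ A ⊆ Set.Ico 0 α →
      ∀ (X : Matrix (Fin n) (Fin n) ℂ), (1 - Xᴴ * X).PosSemidef →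
      ∀ (hXAX : (Xᴴ * A * X).IsHermitian),
        (Xᴴ * hA.cfc f * X - hXAX.cfc f).PosSemidef) :
    ∀ (n : ℕ) (A B : Matrix (Fin n) (Fin n) ℂ) (hA : A.PosDef) (hB : B.PosDef),
      spectrum ℝ A ⊆ Set.Ioo 0 α → spectrum ℝ B ⊆ Set.Ioo 0 α →
      (A - B).PosSemidef →
      (hA.isHermitian.cfc (fun t => f t / t) - hB.isHermitian.cfc (fun t => f t / t)).PosSemidef :=
  div_operator_monotone_of_transformer_general α f htrans
end

section
/- Let f : [0,α) → ℝ satisfy f(PAP) ≤ P f(A) P for every Hermitian matrix A with spectrum in [0,α) and every orthogonal projection P (over all matrix sizes). Then f is operator convex on [0,α) and f(0) ≤ 0. -/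
/-!
Embed `A` and `B` as the diagonal blocks of `T = fromBlocks A 0 0 B` and conjugate by the rotation
`U = [[√λ, -√(1-λ)], [√(1-λ), √λ]]`. Compressing `Uᴴ T U` to the upper-left block with
`P = fromBlocks 1 0 0 0` gives `fromBlocks (λA + (1-λ)B) 0 0 0`, while compressing `f (Uᴴ T U)`
gives `fromBlocks (λ f(A) + (1-λ) f(B)) 0 0 0`; the upper-left block of the projection inequality
is then Jensen's operator inequality. With `A = P = 0` the projection inequality reads `-f(0) ≥ 0`.

Since a matrix has finite spectrum, `cfc f A` is a polynomial in `A` (Lagrange interpolation), which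
is why the functional calculus commutes with block embeddings, reindexing and unitary conjugation.
-/

open Matrix Polynomial
open scoped ComplexOrder

theorem Set.Finite.exists_polynomial_eqOn_eval {K : Type*} [Field K] {s : Set K} (hs : s.Finite)
    (f : K → K) : ∃ p : K[X], Set.EqOn (fun x => p.eval x) f s := by
  classical
  exact ⟨Lagrange.interpolate hs.toFinset id f, fun _ hx =>
    Lagrange.eval_interpolate_at_node f (Set.injOn_id _) (hs.mem_toFinset.2 hx)⟩

namespace Matrix

variable {𝕜 : Type*} [RCLike 𝕜] {ι κ : Type*} [Fintype ι] [DecidableEq ι] [Fintype κ]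
  [DecidableEq κ]

theorem IsHermitian.cfc_eq_aeval {A : Matrix ι ι 𝕜} (hA : A.IsHermitian) {f : ℝ → ℝ} {p : ℝ[X]}
    (hp : Set.EqOn (fun x => p.eval x) f (spectrum ℝ A)) : cfc f A = aeval A p := by
  rw [← cfc_polynomial p A hA.isSelfAdjoint]
  exact cfc_congr fun x hx => (hp hx).symm

theorem IsHermitian.cfc_algHom_apply {R F : Type*} [Ring R] [Algebra ℝ R]
    [FunLike F R (Matrix κ κ 𝕜)] [AlgHomClass F ℝ R (Matrix κ κ 𝕜)] (φ : F) {x : R}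
    (hx : (φ x).IsHermitian) {f : ℝ → ℝ} {p : ℝ[X]}
    (hp : Set.EqOn (fun x => p.eval x) f (spectrum ℝ x)) : cfc f (φ x) = φ (aeval x p) := by
  rw [hx.cfc_eq_aeval (hp.mono (AlgHom.spectrum_apply_subset φ x)), aeval_algHom_apply]

theorem IsHermitian.cfc_map {F : Type*} [FunLike F (Matrix ι ι 𝕜) (Matrix κ κ 𝕜)]
    [AlgHomClass F ℝ (Matrix ι ι 𝕜) (Matrix κ κ 𝕜)] {A : Matrix ι ι 𝕜} (hA : A.IsHermitian)
    (φ : F) (hφA : (φ A).IsHermitian) (f : ℝ → ℝ) : cfc f (φ A) = φ (cfc f A) := by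
  obtain ⟨p, hp⟩ := (finite_real_spectrum (A := A)).exists_polynomial_eqOn_eval f
  rw [hφA.cfc_algHom_apply φ hp, hA.cfc_eq_aeval hp]

variable (𝕜 ι κ) in
def fromBlocksDiagAlgHom : Matrix ι ι 𝕜 × Matrix κ κ 𝕜 →ₐ[ℝ] Matrix (ι ⊕ κ) (ι ⊕ κ) 𝕜 where
  toFun x := fromBlocks x.1 0 0 x.2
  map_one' := fromBlocks_one
  map_mul' x y := by simp [fromBlocks_multiply]
  map_zero' := fromBlocks_zero
  map_add' x y := by simp [fromBlocks_add]
  commutes' r := by simp [Algebra.algebraMap_eq_smul_one, ← fromBlocks_one, fromBlocks_smul]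

theorem spectrum_fromBlocks_diag_subset (A : Matrix ι ι 𝕜) (B : Matrix κ κ 𝕜) :
    spectrum ℝ (fromBlocks A 0 0 B) ⊆ spectrum ℝ A ∪ spectrum ℝ B := by
  rw [← Prod.spectrum_eq]
  exact AlgHom.spectrum_apply_subset (fromBlocksDiagAlgHom 𝕜 ι κ) (A, B)

theorem cfc_fromBlocks_diag {A : Matrix ι ι 𝕜} {B : Matrix κ κ 𝕜} (hA : A.IsHermitian)
    (hB : B.IsHermitian) (f : ℝ → ℝ) :
    cfc f (fromBlocks A 0 0 B) = fromBlocks (cfc f A) 0 0 (cfc f B) := by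
  obtain ⟨p, hp⟩ := ((finite_real_spectrum (A := A)).union
    (finite_real_spectrum (A := B))).exists_polynomial_eqOn_eval f
  have hAB : (fromBlocksDiagAlgHom 𝕜 ι κ (A, B)).IsHermitian :=
    hA.fromBlocks (by simp) hB
  rw [← Prod.spectrum_eq] at hp
  have := hAB.cfc_algHom_apply _ hp
  simp only [fromBlocksDiagAlgHom, AlgHom.coe_mk, RingHom.coe_mk, MonoidHom.coe_mk,
    OneHom.coe_mk, aeval_prod_apply] at this
  rw [this, hA.cfc_eq_aeval (fun x hx => hp (by simp [Prod.spectrum_eq, hx])),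
    hB.cfc_eq_aeval (fun x hx => hp (by simp [Prod.spectrum_eq, hx]))]

theorem IsHermitian.cfc_star_mul_mul {A : Matrix ι ι 𝕜} (hA : A.IsHermitian)
    (u : unitary (Matrix ι ι 𝕜)) (f : ℝ → ℝ) :
    cfc f (star (u : Matrix ι ι 𝕜) * A * u) = star (u : Matrix ι ι 𝕜) * cfc f A * u := by
  have hconj : (star (u : Matrix ι ι 𝕜) * A * u).IsHermitian :=
    isHermitian_conjTranspose_mul_mul (u : Matrix ι ι 𝕜) hA
  simpa using hA.cfc_map (Unitary.conjStarAlgAut ℝ _ (star u)) (by simpa using hconj) f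

def blockRotation (c s : ℝ) : Matrix (ι ⊕ ι) (ι ⊕ ι) 𝕜 :=
  fromBlocks (c • 1) (-s • 1) (s • 1) (c • 1)

theorem blockRotation_mem_unitary {c s : ℝ} (h : c ^ 2 + s ^ 2 = 1) :
    (blockRotation c s : Matrix (ι ⊕ ι) (ι ⊕ ι) 𝕜) ∈ unitary _ := by
  rw [← unitaryGroup, mem_unitaryGroup_iff]
  have h' : c * c + s * s = 1 := by rw [← sq, ← sq, h]
  simp [blockRotation, star_eq_conjTranspose, fromBlocks_conjTranspose, fromBlocks_multiply,
    smul_smul, ← add_smul, mul_comm c s, h', add_comm (s * s)]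

theorem fromBlocks_one_zero_mul_blockRotation_conj (c s : ℝ) (X Y : Matrix ι ι 𝕜) :
    fromBlocks 1 0 0 0 * (star (blockRotation c s) * fromBlocks X 0 0 Y * blockRotation c s) *
      fromBlocks 1 0 0 0 = fromBlocks ((c ^ 2) • X + (s ^ 2) • Y) 0 0 0 := by
  simp [blockRotation, star_eq_conjTranspose, fromBlocks_conjTranspose, fromBlocks_multiply,
    smul_smul, sq]

end Matrix

section CompressionInequality

variable (𝕜 : Type*) [RCLike 𝕜] (ι : Type*) [Fintype ι] [DecidableEq ι]

def CompressionInequalityOn (s : Set ℝ) (f : ℝ → ℝ) : Prop :=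
  ∀ A : Matrix ι ι 𝕜, A.IsHermitian → spectrum ℝ A ⊆ s →
    ∀ P : Matrix ι ι 𝕜, Pᴴ = P → P * P = P → (P * cfc f A * P - cfc f (P * A * P)).PosSemidef

variable {𝕜 ι} {s : Set ℝ} {f : ℝ → ℝ}

theorem CompressionInequalityOn.of_fin (h : ∀ n, CompressionInequalityOn 𝕜 (Fin n) s f) :
    CompressionInequalityOn 𝕜 ι s f := by
  intro A hA hs P hP hPP
  let e := Fintype.equivFin ι
  let φ := reindexAlgEquiv ℝ 𝕜 e
  have hφA : (φ A).IsHermitian := hA.submatrix _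
  have hPAP : (P * A * P).IsHermitian := by
    simpa only [hP] using isHermitian_conjTranspose_mul_mul P hA
  have key := h _ (φ A) hφA (by rwa [AlgEquiv.spectrum_eq]) (φ P)
    (by simp [φ, hP]) (by rw [← map_mul, hPP])
  rw [← map_mul, ← map_mul, hA.cfc_map φ hφA, ← map_mul, ← map_mul,
    hPAP.cfc_map φ (hPAP.submatrix _), ← map_sub] at key
  simpa [φ] using key.submatrix e

theorem CompressionInequalityOn.apply_zero_nonpos [Nonempty ι]
    (h : CompressionInequalityOn 𝕜 ι s f) (h0 : 0 ∈ s) : f 0 ≤ 0 := by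
  have key := h 0 isHermitian_zero (by simpa [spectrum.zero_eq] using h0) 0 (by simp) (by simp)
  simpa [algebraMap_matrix_apply] using key.diag_nonneg (i := Classical.arbitrary ι)

theorem CompressionInequalityOn.posSemidef_convex_combination_sub_cfc
    (h : CompressionInequalityOn 𝕜 (ι ⊕ ι) s f)
    {A B : Matrix ι ι 𝕜} (hA : A.IsHermitian) (hB : B.IsHermitian) (hsA : spectrum ℝ A ⊆ s)
    (hsB : spectrum ℝ B ⊆ s) {l : ℝ} (hl : l ∈ Set.Icc (0 : ℝ) 1) :
    (l • cfc f A + (1 - l) • cfc f B - cfc f (l • A + (1 - l) • B)).PosSemidef := by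
  obtain ⟨hl0, hl1⟩ := hl
  have hcs : √l ^ 2 + √(1 - l) ^ 2 = 1 := by
    rw [Real.sq_sqrt hl0, Real.sq_sqrt (sub_nonneg.2 hl1)]; ring
  let U : unitary (Matrix (ι ⊕ ι) (ι ⊕ ι) 𝕜) := ⟨_, blockRotation_mem_unitary hcs⟩
  have hT : (fromBlocks A 0 0 B).IsHermitian := hA.fromBlocks (by simp) hB
  have hC : (l • A + (1 - l) • B).IsHermitian :=
    (hA.smul (.all l)).add (hB.smul (.all (1 - l)))
  have key := h (star (U : Matrix (ι ⊕ ι) (ι ⊕ ι) 𝕜) * fromBlocks A 0 0 B * U)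
    (isHermitian_conjTranspose_mul_mul _ hT)
    (by rw [Unitary.spectrum_star_left_conjugate]
        exact (spectrum_fromBlocks_diag_subset A B).trans (Set.union_subset hsA hsB))
    (fromBlocks 1 0 0 0) (by simp [fromBlocks_conjTranspose]) (by simp [fromBlocks_multiply])
  rw [hT.cfc_star_mul_mul, cfc_fromBlocks_diag hA hB, fromBlocks_one_zero_mul_blockRotation_conj,
    fromBlocks_one_zero_mul_blockRotation_conj, Real.sq_sqrt hl0, Real.sq_sqrt (sub_nonneg.2 hl1),
    cfc_fromBlocks_diag hC isHermitian_zero] at key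
  exact key.submatrix Sum.inl

end CompressionInequality

/-- If `f(PAP) ≤ P f(A) P` for every Hermitian `A` with spectrum in `[0, α)` and every
orthogonal projection `P` (all sizes), then `f` is operator convex on `[0, α)` and `f 0 ≤ 0`. -/
theorem operator_convex_of_projection_inequality (α : ℝ) (hα : 0 < α) (f : ℝ → ℝ)
    (hproj : ∀ (n : ℕ) (A : Matrix (Fin n) (Fin n) ℂ) (hA : A.IsHermitian),
      spectrum ℝ A ⊆ Set.Ico 0 α →
      ∀ (P : Matrix (Fin n) (Fin n) ℂ), Pᴴ = P → P * P = P →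
      ∀ (hPAP : (P * A * P).IsHermitian),
        (P * hA.cfc f * P - hPAP.cfc f).PosSemidef) :
    f 0 ≤ 0 ∧
    ∀ (n : ℕ) (A B : Matrix (Fin n) (Fin n) ℂ) (hA : A.IsHermitian) (hB : B.IsHermitian),
      spectrum ℝ A ⊆ Set.Ico 0 α → spectrum ℝ B ⊆ Set.Ico 0 α →
      ∀ l : ℝ, l ∈ Set.Icc (0:ℝ) 1 →
      ∀ (hC : (l • A + (1 - l) • B).IsHermitian),
        (l • hA.cfc f + (1 - l) • hB.cfc f - hC.cfc f).PosSemidef := by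
  have hfin (n : ℕ) : CompressionInequalityOn ℂ (Fin n) (Set.Ico 0 α) f := by
    intro A hA hs P hP hPP
    have hPAP : (P * A * P).IsHermitian := by
      simpa only [hP] using isHermitian_conjTranspose_mul_mul P hA
    simpa only [hA.cfc_eq, hPAP.cfc_eq] using hproj n A hA hs P hP hPP hPAP
  refine ⟨(hfin 1).apply_zero_nonpos ⟨le_rfl, hα⟩, fun n A B hA hB hsA hsB l hl hC => ?_⟩
  rw [← hA.cfc_eq, ← hB.cfc_eq, ← hC.cfc_eq]
  exact (CompressionInequalityOn.of_fin hfin).posSemidef_convex_combination_sub_cfc hA hB hsA hsB hl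
end

section
/- If g : [0,α) → ℝ is continuous and operator monotone, then h(t) := t·g(t) satisfies h(PAP) ≤ P h(A) P for every positive definite matrix A with spectrum in [0,α) and every orthogonal projection P. -/
/-!
Write `A = S²` with `S = √A` and put `B = S P S`. Then `0 ≤ B ≤ A`, so `g(B) ≤ g(A)` by operator
monotonicity. Since `PAP = (SP)⋆(SP)` and `B = (SP)(SP)⋆`, the intertwining `(SP)·PAP = B·(SP)`
passes to the functional calculus, which gives `h(PAP) = PAP·g(PAP) = (SP)⋆ g(B) (SP)`, while
`P h(A) P = (SP)⋆ g(A) (SP)`. Hence `P h(A) P - h(PAP) = (SP)⋆ (g(A) - g(B)) (SP) ≥ 0`.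
-/

open Matrix Polynomial
open scoped ComplexOrder MatrixOrder

theorem Set.Finite.exists_lt_forall_le {β : Type*} [LinearOrder β] [NoMinOrder β] {s : Set β}
    (hs : s.Finite) {b : β} (h : ∀ x ∈ s, x < b) : ∃ r < b, ∀ x ∈ s, x ≤ r := by
  rcases s.eq_empty_or_nonempty with rfl | hne
  · obtain ⟨r, hr⟩ := exists_lt b
    exact ⟨r, hr, by simp⟩
  · obtain ⟨r, hr, hmax⟩ := Set.exists_max_image s id hs hne
    exact ⟨r, h r hr, hmax⟩

theorem SemiconjBy.aeval {R A : Type*} [CommSemiring R] [Semiring A] [Algebra R A] {c a b : A}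
    (h : SemiconjBy c a b) (q : R[X]) : SemiconjBy c (aeval a q) (aeval b q) := by
  induction q using Polynomial.induction_on' with
  | add q₁ q₂ h₁ h₂ => simpa only [map_add] using h₁.add_right h₂
  | monomial k r =>
    simpa only [aeval_monomial] using
      SemiconjBy.mul_right (Algebra.commute_algebraMap_right r c) (h.pow_right k)

/-- On finite spectra `f` agrees with a polynomial, and intertwiners pass through polynomials. -/
theorem SemiconjBy.cfc {R A : Type*} {p : A → Prop} [Field R] [StarRing R] [MetricSpace R]
    [IsTopologicalSemiring R] [ContinuousStar R] [TopologicalSpace A] [Ring A] [StarRing A]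
    [Algebra R A] [ContinuousFunctionalCalculus R A p] {c a b : A} (h : SemiconjBy c a b)
    (f : R → R) (ha : (spectrum R a).Finite) (hb : (spectrum R b).Finite)
    (hpa : p a := by cfc_tac) (hpb : p b := by cfc_tac) :
    SemiconjBy c (cfc f a) (cfc f b) := by
  classical
  set q := Lagrange.interpolate (ha.union hb).toFinset id f
  have hq : ∀ x ∈ spectrum R a ∪ spectrum R b, f x = q.eval x := fun x hx =>
    (Lagrange.eval_interpolate_at_node f (Set.injOn_id _) ((ha.union hb).mem_toFinset.2 hx)).symm
  rw [cfc_congr fun x hx => hq x (.inl hx), cfc_congr fun x hx => hq x (.inr hx),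
    cfc_polynomial q a, cfc_polynomial q b]
  exact h.aeval q

section SelfAdjoint

variable {A : Type*} [TopologicalSpace A] [Ring A] [StarRing A] [Algebra ℝ A]
  [ContinuousFunctionalCalculus ℝ A IsSelfAdjoint]

theorem cfc_mul_id_star_mul_self (g : ℝ → ℝ) (c : A) (h₁ : (spectrum ℝ (star c * c)).Finite)
    (h₂ : (spectrum ℝ (c * star c)).Finite) :
    cfc (fun t => t * g t) (star c * c) = star c * cfc g (c * star c) * c := by
  have hc : SemiconjBy c (star c * c) (c * star c) := (mul_assoc _ _ _).symm
  rw [cfc_mul (fun t => t) g _ (h₁.continuousOn _) (h₁.continuousOn _), cfc_id' ℝ (star c * c),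
    mul_assoc, mul_assoc, (hc.cfc g h₁ h₂).eq]

theorem spectrum_subset_Iio_of_le [PartialOrder A] [StarOrderedRing A] [NonnegSpectrumClass ℝ A]
    {a b : A} {r : ℝ} (hab : b ≤ a) (hb : IsSelfAdjoint b) (ha : (spectrum ℝ a).Finite)
    (hspec : spectrum ℝ a ⊆ Set.Iio r) : spectrum ℝ b ⊆ Set.Iio r := by
  have ha' : IsSelfAdjoint a := by
    simpa using (IsSelfAdjoint.of_nonneg (sub_nonneg.2 hab)).add hb
  obtain ⟨s, hsr, hs⟩ := ha.exists_lt_forall_le hspec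
  have hbs : b ≤ algebraMap ℝ A s := hab.trans ((le_algebraMap_iff_spectrum_le ha').2 hs)
  exact fun x hx => ((le_algebraMap_iff_spectrum_le hb).1 hbs x hx).trans_lt hsr

end SelfAdjoint

theorem mul_id_of_operator_monotone_general (α : ℝ) (g : ℝ → ℝ)
    (hmono : ∀ (n : ℕ) (A B : Matrix (Fin n) (Fin n) ℂ)
      (hA : A.IsHermitian) (hB : B.IsHermitian),
      spectrum ℝ A ⊆ Set.Ico 0 α → spectrum ℝ B ⊆ Set.Ico 0 α →
      (A - B).PosSemidef → (hA.cfc g - hB.cfc g).PosSemidef) :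
    ∀ (n : ℕ) (A : Matrix (Fin n) (Fin n) ℂ) (hA : A.PosDef),
      spectrum ℝ A ⊆ Set.Ico 0 α →
      ∀ (P : Matrix (Fin n) (Fin n) ℂ), Pᴴ = P → P * P = P →
      ∀ (hPAP : (P * A * P).IsHermitian),
        (P * hA.isHermitian.cfc (fun t => t * g t) * P -
          hPAP.cfc (fun t => t * g t)).PosSemidef := by
  intro n A hA hspecA P hP hP2 hPAP
  have hPproj : IsStarProjection P := ⟨hP2, hP⟩
  set S := CFC.sqrt A
  have hS : IsSelfAdjoint S := (CFC.sqrt_nonneg A).isSelfAdjoint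
  have hSS : S * S = A := CFC.sqrt_mul_sqrt_self A hA.posSemidef.nonneg
  set B := S * P * S
  have hB : 0 ≤ B := hS.conjugate_nonneg hPproj.nonneg
  have hBA : B ≤ A := by simpa only [mul_one, hSS] using hS.conjugate_le_conjugate hPproj.le_one
  have hspecB : spectrum ℝ B ⊆ Set.Ico 0 α := fun x hx =>
    ⟨spectrum_nonneg_of_nonneg hB hx, spectrum_subset_Iio_of_le hBA hB.isSelfAdjoint
      A.finite_real_spectrum (fun y hy => (hspecA hy).2) hx⟩
  have hgBA : cfc g B ≤ cfc g A := by
    have := hmono n A B hA.isHermitian hB.posSemidef.isHermitian hspecA hspecB (le_iff.1 hBA)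
    rwa [← IsHermitian.cfc_eq, ← IsHermitian.cfc_eq] at this
  have hhA : cfc (fun t => t * g t) A = S * cfc g A * S := by
    simpa only [hS.star_eq, hSS] using
      cfc_mul_id_star_mul_self g S finite_real_spectrum finite_real_spectrum
  have hhPAP : cfc (fun t => t * g t) (P * A * P) = star (S * P) * cfc g B * (S * P) := by
    have hc₁ : star (S * P) * (S * P) = P * A * P := by
      rw [star_mul, hS.star_eq, hPproj.isSelfAdjoint.star_eq, ← hSS]; noncomm_ring
    have hc₂ : S * P * star (S * P) = B := by
      rw [star_mul, hS.star_eq, hPproj.isSelfAdjoint.star_eq, ← mul_assoc, mul_assoc S P P, hP2]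
    rw [← hc₁, ← hc₂]
    exact cfc_mul_id_star_mul_self g _ finite_real_spectrum finite_real_spectrum
  rw [← IsHermitian.cfc_eq, ← IsHermitian.cfc_eq, hhA, hhPAP, ← nonneg_iff_posSemidef]
  convert star_left_conjugate_nonneg (sub_nonneg.2 hgBA) (S * P) using 1
  simp only [star_mul, hS.star_eq, hPproj.isSelfAdjoint.star_eq, mul_sub, sub_mul, mul_assoc]

/-- If `g` is continuous and operator monotone on `[0, α)`, then `h(t) = t * g(t)` satisfies
`h(PAP) ≤ P h(A) P` for positive definite `A` with spectrum in `[0, α)` and projections `P`. -/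
theorem mul_id_of_operator_monotone (α : ℝ) (hα : 0 < α) (g : ℝ → ℝ)
    (hcont : ContinuousOn g (Set.Ico 0 α))
    (hmono : ∀ (n : ℕ) (A B : Matrix (Fin n) (Fin n) ℂ)
      (hA : A.IsHermitian) (hB : B.IsHermitian),
      spectrum ℝ A ⊆ Set.Ico 0 α → spectrum ℝ B ⊆ Set.Ico 0 α →
      (A - B).PosSemidef → (hA.cfc g - hB.cfc g).PosSemidef) :
    ∀ (n : ℕ) (A : Matrix (Fin n) (Fin n) ℂ) (hA : A.PosDef),
      spectrum ℝ A ⊆ Set.Ico 0 α →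
      ∀ (P : Matrix (Fin n) (Fin n) ℂ), Pᴴ = P → P * P = P →
      ∀ (hPAP : (P * A * P).IsHermitian),
        (P * hA.isHermitian.cfc (fun t => t * g t) * P -
          hPAP.cfc (fun t => t * g t)).PosSemidef :=
  mul_id_of_operator_monotone_general α g hmono
end

section
/- Let f : [0,∞) → ℝ be operator convex with f(0) ≤ 0 and f(t) ≤ 0 for all t ≥ 0. Then -f is operator monotone on [0,∞): if A ≥ B ≥ 0 are positive semidefinite matrices then f(A) ≤ f(B). -/
open Matrix
open scoped ComplexOrder

/-!
For `0 ≤ λ < 1` write `A = λ B + (1 - λ) D` with `D = (1 - λ)⁻¹ (A - λ B) ≥ 0`. Operator convexity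
gives `f A ≤ λ f B + (1 - λ) f D ≤ λ f B`, since `f D ≤ 0`. The positive semidefinite cone is
closed, so letting `λ → 1` yields `f A ≤ f B`.
-/

namespace Matrix

variable {n 𝕜 : Type*} [Fintype n] [RCLike 𝕜]

theorem isClosed_setOf_posSemidef : IsClosed {M : Matrix n n 𝕜 | M.PosSemidef} := by
  simp only [posSemidef_iff_dotProduct_mulVec, Set.ofPred_and, Set.ofPred_forall]
  refine .inter (isClosed_eq (by fun_prop) continuous_id) (isClosed_iInter fun x => ?_)
  exact isClosed_le continuous_const (by fun_prop)

variable [DecidableEq n]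

theorem PosSemidef.spectrum_subset_Ici {A : Matrix n n 𝕜} (hA : A.PosSemidef) :
    spectrum ℝ A ⊆ Set.Ici 0 := by
  rw [hA.isHermitian.spectrum_real_eq_range_eigenvalues]
  rintro _ ⟨i, rfl⟩
  exact hA.eigenvalues_nonneg i

open scoped MatrixOrder in
theorem IsHermitian.posSemidef_neg_cfc {A : Matrix n n 𝕜} (hA : A.IsHermitian) {f : ℝ → ℝ}
    (hf : ∀ x ∈ spectrum ℝ A, f x ≤ 0) : (-hA.cfc f).PosSemidef := by
  rw [← hA.cfc_eq, ← cfc_neg, ← nonneg_iff_posSemidef]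
  exact cfc_nonneg fun x hx => neg_nonneg.2 (hf x hx)

theorem IsHermitian.cfc_congr {A A' : Matrix n n 𝕜} (hA : A.IsHermitian) (hA' : A'.IsHermitian)
    (h : A = A') (f : ℝ → ℝ) : hA.cfc f = hA'.cfc f := by
  subst h; rfl

end Matrix

def OperatorConvexOnNonneg (f : ℝ → ℝ) : Prop :=
  ∀ (n : ℕ) (A B : Matrix (Fin n) (Fin n) ℂ) (hA : A.IsHermitian) (hB : B.IsHermitian),
    spectrum ℝ A ⊆ Set.Ici 0 → spectrum ℝ B ⊆ Set.Ici 0 →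
    ∀ l : ℝ, l ∈ Set.Icc (0:ℝ) 1 →
    ∀ (hC : (l • A + (1 - l) • B).IsHermitian),
      (l • hA.cfc f + (1 - l) • hB.cfc f - hC.cfc f).PosSemidef

theorem OperatorConvexOnNonneg.posSemidef_smul_cfc_sub_cfc {f : ℝ → ℝ}
    (hf : OperatorConvexOnNonneg f) (hf_nonpos : ∀ t, 0 ≤ t → f t ≤ 0) {n : ℕ}
    {A B : Matrix (Fin n) (Fin n) ℂ} (hA : A.IsHermitian) (hB : B.PosSemidef)
    (hAB : (A - B).PosSemidef) {l : ℝ} (hl₀ : 0 ≤ l) (hl₁ : l < 1) :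
    (l • hB.isHermitian.cfc f - hA.cfc f).PosSemidef := by
  have h1l : 0 < 1 - l := sub_pos.2 hl₁
  set D := (1 - l)⁻¹ • (A - l • B)
  have hD : D.PosSemidef := by
    have : A - l • B = (A - B) + (1 - l) • B := by module
    simpa only [D, this] using (hAB.add (hB.smul h1l.le)).smul (inv_nonneg.2 h1l.le)
  have hA_eq : l • B + (1 - l) • D = A := by
    rw [smul_smul, mul_inv_cancel₀ h1l.ne', one_smul]
    module
  have hC : (l • B + (1 - l) • D).IsHermitian := hA_eq ▸ hA
  have hconv := hf n B D hB.isHermitian hD.isHermitian hB.spectrum_subset_Ici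
    hD.spectrum_subset_Ici l ⟨hl₀, hl₁.le⟩ hC
  rw [hC.cfc_congr hA hA_eq] at hconv
  have hfD := (hD.isHermitian.posSemidef_neg_cfc fun x hx =>
    hf_nonpos x (hD.spectrum_subset_Ici hx)).smul h1l.le
  convert hconv.add hfD using 1
  module

open Filter Topology in
theorem neg_operator_monotone_of_operator_convex_general (f : ℝ → ℝ)
    (hconvex : ∀ (n : ℕ) (A B : Matrix (Fin n) (Fin n) ℂ)
      (hA : A.IsHermitian) (hB : B.IsHermitian),
      spectrum ℝ A ⊆ Set.Ici 0 → spectrum ℝ B ⊆ Set.Ici 0 →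
      ∀ l : ℝ, l ∈ Set.Icc (0:ℝ) 1 →
      ∀ (hC : (l • A + (1 - l) • B).IsHermitian),
        (l • hA.cfc f + (1 - l) • hB.cfc f - hC.cfc f).PosSemidef)
    (hfneg : ∀ t : ℝ, 0 ≤ t → f t ≤ 0) :
    ∀ (n : ℕ) (A B : Matrix (Fin n) (Fin n) ℂ) (hA : A.PosSemidef) (hB : B.PosSemidef),
      (A - B).PosSemidef →
      (hB.isHermitian.cfc f - hA.isHermitian.cfc f).PosSemidef := by
  intro n A B hA hB hAB
  set P := hB.isHermitian.cfc f
  set Q := hA.isHermitian.cfc f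
  have hlim : Tendsto (fun l : ℝ => l • P - Q) (𝓝[<] 1) (𝓝 (P - Q)) := by
    have : Continuous fun l : ℝ => l • P - Q := by fun_prop
    simpa using (this.tendsto 1).mono_left nhdsWithin_le_nhds
  refine isClosed_setOf_posSemidef.mem_of_tendsto hlim ?_
  filter_upwards [Ioo_mem_nhdsLT zero_lt_one] with l hl
  exact OperatorConvexOnNonneg.posSemidef_smul_cfc_sub_cfc hconvex hfneg hA.isHermitian hB hAB
    hl.1.le hl.2

/-- If `f : [0,∞) → ℝ` is operator convex with `f 0 ≤ 0` and `f ≤ 0`, then `-f` is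
operator monotone on `[0,∞)`. -/
theorem neg_operator_monotone_of_operator_convex (f : ℝ → ℝ)
    (hconvex : ∀ (n : ℕ) (A B : Matrix (Fin n) (Fin n) ℂ)
      (hA : A.IsHermitian) (hB : B.IsHermitian),
      spectrum ℝ A ⊆ Set.Ici 0 → spectrum ℝ B ⊆ Set.Ici 0 →
      ∀ l : ℝ, l ∈ Set.Icc (0:ℝ) 1 →
      ∀ (hC : (l • A + (1 - l) • B).IsHermitian),
        (l • hA.cfc f + (1 - l) • hB.cfc f - hC.cfc f).PosSemidef)
    (hf0 : f 0 ≤ 0) (hfneg : ∀ t : ℝ, 0 ≤ t → f t ≤ 0) :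
    ∀ (n : ℕ) (A B : Matrix (Fin n) (Fin n) ℂ) (hA : A.PosSemidef) (hB : B.PosSemidef),
      (A - B).PosSemidef →
      (hB.isHermitian.cfc f - hA.isHermitian.cfc f).PosSemidef :=
  neg_operator_monotone_of_operator_convex_general f hconvex hfneg
end

section
/- If f : (0,∞) → (0,∞) is operator concave, then 1/f is operator convex on (0,∞): for positive definite A, B, g((A+B)/2) ≤ (g(A)+g(B))/2 where g(t) = 1/f(t). -/
/-!
Write `g = 1/f`. Operator concavity gives `(f(A) + f(B))/2 ≤ f((A+B)/2)`, and inversion is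
operator antitone on strictly positive elements, so `g((A+B)/2) ≤ ((f(A) + f(B))/2)⁻¹`.
Inversion is also midpoint operator convex: for strictly positive `x, y` the gap between the
arithmetic and harmonic means is a congruence of a positive element,
`x + y - 4 (x⁻¹ + y⁻¹)⁻¹ = (x - y) (x + y)⁻¹ (x - y)`,
and with `x = f(A)⁻¹`, `y = f(B)⁻¹` this gives `((f(A) + f(B))/2)⁻¹ ≤ (g(A) + g(B))/2`.
-/

open Matrix
open scoped ComplexOrder Ring

theorem Ring.inverse_smul {𝕜 R : Type*} [Field 𝕜] [Ring R] [Algebra 𝕜 R] {c : 𝕜} (hc : c ≠ 0)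
    {a : R} (ha : IsUnit a) : (c • a)⁻¹ʳ = c⁻¹ • a⁻¹ʳ :=
  Ring.inverse_unit ⟨c • a, c⁻¹ • a⁻¹ʳ,
    by rw [smul_mul_smul_comm, mul_inv_cancel₀ hc, one_smul, Ring.mul_inverse_cancel a ha],
    by rw [smul_mul_smul_comm, inv_mul_cancel₀ hc, one_smul, Ring.inverse_mul_cancel a ha]⟩

theorem Ring.add_sub_four_mul_inverse_inverse_add_inverse {R : Type*} [Ring R] {a b : R}
    (ha : IsUnit a) (hb : IsUnit b) (hab : IsUnit (a + b)) :
    a + b - 4 * (a⁻¹ʳ + b⁻¹ʳ)⁻¹ʳ = (a - b) * (a + b)⁻¹ʳ * (a - b) := by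
  have hinv : (a⁻¹ʳ + b⁻¹ʳ)⁻¹ʳ = b - b * (a + b)⁻¹ʳ * b := by
    rw [Ring.inverse_add_inverse (iff_of_true ha hb), Ring.inverse_mul (.inr hb.ringInverse),
      Ring.inverse_mul (.inl ha.ringInverse), Ring.inverse_inverse ha, Ring.inverse_inverse hb,
      ← mul_assoc, eq_sub_iff_add_eq, ← mul_add, Ring.inverse_mul_cancel_right _ _ hab]
  have hdiff : a - b = (a + b) - 2 * b := by noncomm_ring
  rw [hinv, hdiff]
  generalize a + b = s at hab ⊢
  simp only [sub_mul, mul_sub, mul_assoc, Ring.mul_inverse_cancel_left _ _ hab,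
    Ring.inverse_mul_cancel _ hab, mul_one]
  noncomm_ring

namespace CStarAlgebra

variable {A : Type*} [CStarAlgebra A] [PartialOrder A] [StarOrderedRing A]

theorem four_mul_ringInverse_add_le_ringInverse_add_ringInverse {a b : A}
    (ha : IsStrictlyPositive a) (hb : IsStrictlyPositive b) : 4 * (a + b)⁻¹ʳ ≤ a⁻¹ʳ + b⁻¹ʳ := by
  have hsum : IsStrictlyPositive (a⁻¹ʳ + b⁻¹ʳ) :=
    isStrictlyPositive_add (.inl ⟨ha.ringInverse, hb.ringInverse.nonneg⟩)
  have key := Ring.add_sub_four_mul_inverse_inverse_add_inverse ha.ringInverse.isUnit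
    hb.ringInverse.isUnit hsum.isUnit
  rw [Ring.inverse_inverse ha.isUnit, Ring.inverse_inverse hb.isUnit] at key
  rw [← sub_nonneg, key]
  exact (ha.ringInverse.isSelfAdjoint.sub hb.ringInverse.isSelfAdjoint).conjugate_nonneg
    hsum.ringInverse.nonneg

theorem ringInverse_midpoint_le {a b : A} (ha : IsStrictlyPositive a) (hb : IsStrictlyPositive b) :
    ((2 : ℝ)⁻¹ • (a + b))⁻¹ʳ ≤ (2 : ℝ)⁻¹ • (a⁻¹ʳ + b⁻¹ʳ) := by
  have hab : IsUnit (a + b) := (isStrictlyPositive_add (.inl ⟨ha, hb.nonneg⟩)).isUnit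
  calc ((2 : ℝ)⁻¹ • (a + b))⁻¹ʳ = (2 : ℝ)⁻¹ • (4 * (a + b)⁻¹ʳ) := by
        rw [Ring.inverse_smul (by norm_num) hab, inv_inv, Algebra.smul_def, Algebra.smul_def,
          ← mul_assoc, ← map_ofNat (algebraMap ℝ A) 4, ← map_mul]
        norm_num
    _ ≤ (2 : ℝ)⁻¹ • (a⁻¹ʳ + b⁻¹ʳ) := smul_le_smul_of_nonneg_left
        (four_mul_ringInverse_add_le_ringInverse_add_ringInverse ha hb) (by norm_num)

theorem cfc_inv_midpoint_le {f : ℝ → ℝ} (hf : ∀ t, 0 < t → 0 < f t) {a b : A}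
    (ha : IsStrictlyPositive a) (hb : IsStrictlyPositive b)
    (hconc : (2 : ℝ)⁻¹ • (cfc f a + cfc f b) ≤ cfc f ((2 : ℝ)⁻¹ • (a + b)))
    (hfa : ContinuousOn f (spectrum ℝ a) := by cfc_cont_tac)
    (hfb : ContinuousOn f (spectrum ℝ b) := by cfc_cont_tac)
    (hfab : ContinuousOn f (spectrum ℝ ((2 : ℝ)⁻¹ • (a + b))) := by cfc_cont_tac) :
    cfc (fun t ↦ (f t)⁻¹) ((2 : ℝ)⁻¹ • (a + b))
      ≤ (2 : ℝ)⁻¹ • (cfc (fun t ↦ (f t)⁻¹) a + cfc (fun t ↦ (f t)⁻¹) b) := by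
  have hmid : IsStrictlyPositive ((2 : ℝ)⁻¹ • (a + b)) :=
    (isStrictlyPositive_add (.inl ⟨ha, hb.nonneg⟩)).smul (by norm_num)
  have hpos {x : A} (hx : IsStrictlyPositive x) : ∀ t ∈ spectrum ℝ x, 0 < f t :=
    fun t ht ↦ hf t (hx.spectrum_pos ht)
  have hfpos {x : A} (hx : IsStrictlyPositive x) (hfx : ContinuousOn f (spectrum ℝ x)) :
      IsStrictlyPositive (cfc f x) :=
    (cfc_isStrictlyPositive_iff f x).mpr (hpos hx)
  rw [cfc_inv f a (fun t ht ↦ (hpos ha t ht).ne'), cfc_inv f b (fun t ht ↦ (hpos hb t ht).ne'),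
    cfc_inv f _ (fun t ht ↦ (hpos hmid t ht).ne')]
  calc (cfc f ((2 : ℝ)⁻¹ • (a + b)))⁻¹ʳ ≤ ((2 : ℝ)⁻¹ • (cfc f a + cfc f b))⁻¹ʳ :=
        ringInverse_le_ringInverse hconc
          ((isStrictlyPositive_add (.inl ⟨hfpos ha hfa, (hfpos hb hfb).nonneg⟩)).smul
            (by norm_num))
    _ ≤ _ := ringInverse_midpoint_le (hfpos ha hfa) (hfpos hb hfb)

end CStarAlgebra

open scoped MatrixOrder Matrix.Norms.L2Operator in
/-- If `f : (0,∞) → (0,∞)` is operator concave, then `1/f` is operator convex on `(0,∞)`. -/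
theorem inv_operator_convex_of_operator_concave (f : ℝ → ℝ)
    (hfpos : ∀ t : ℝ, 0 < t → 0 < f t)
    (hconcave : ∀ (n : ℕ) (A B : Matrix (Fin n) (Fin n) ℂ) (hA : A.PosDef) (hB : B.PosDef)
      (hC : ((2:ℝ)⁻¹ • (A + B)).IsHermitian),
      (hC.cfc f - (2:ℝ)⁻¹ • (hA.isHermitian.cfc f + hB.isHermitian.cfc f)).PosSemidef) :
    ∀ (n : ℕ) (A B : Matrix (Fin n) (Fin n) ℂ) (hA : A.PosDef) (hB : B.PosDef)
      (hC : ((2:ℝ)⁻¹ • (A + B)).IsHermitian),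
      ((2:ℝ)⁻¹ • (hA.isHermitian.cfc (fun t => (f t)⁻¹) + hB.isHermitian.cfc (fun t => (f t)⁻¹))
        - hC.cfc (fun t => (f t)⁻¹)).PosSemidef := by
  intro n A B hA hB hC
  have hconc := Matrix.le_iff.mpr (hconcave n A B hA hB hC)
  have hcont (M : Matrix (Fin n) (Fin n) ℂ) : ContinuousOn f (spectrum ℝ M) :=
    M.finite_real_spectrum.continuousOn f
  simp only [← IsHermitian.cfc_eq] at hconc ⊢
  exact Matrix.le_iff.mp (CStarAlgebra.cfc_inv_midpoint_le hfpos hA.isStrictlyPositive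
    hB.isStrictlyPositive hconc (hcont A) (hcont B) (hcont _))
end

section
/- The logarithm is operator monotone on (0,∞): if A ≥ B > 0 are positive definite matrices, then log A ≥ log B. -/
open Matrix
open scoped ComplexOrder Matrix.Norms.L2Operator MatrixOrder

/-- The logarithm is operator monotone on `(0,∞)`. -/
theorem log_operator_monotone {n : ℕ} (A B : Matrix (Fin n) (Fin n) ℂ)
    (hA : A.PosDef) (hB : B.PosDef) (hAB : (A - B).PosSemidef) :
    (hA.isHermitian.cfc Real.log - hB.isHermitian.cfc Real.log).PosSemidef := by
  rw [← hA.isHermitian.cfc_eq, ← hB.isHermitian.cfc_eq]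
  exact CFC.log_le_log (a := B) (b := A) hAB hB.isStrictlyPositive
end

section
/- If f is a C¹ operator monotone function on (-1,1) with f(0) = 0 and f'(0) = 1, then f(x) ≤ x/(1-x) for all x ∈ [0,1) and f(x) ≥ x/(1+x) for all x ∈ (-1,0]. -/
/-!
For `a < b ≤ e < d`, compare `A = diag(a, e)` with a rank-one perturbation `B = A + w wᵀ` whose
eigenvalues are `b` and `d`. On a two-point spectrum `f` agrees with its chord, so `f B - f A` is an
explicit real symmetric `2 × 2` matrix, and the nonnegativity of its determinant reads
`[a, e] [b, d] ≤ [a, b] [e, d]` for the divided differences of `f`. Letting `b → a = 0` with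
`f 0 = 0`, `f' 0 = 1` gives `f x f d / (x d) ≤ [x, d]`, hence `f x (d - x) ≤ d x` for
`0 < x < d < 1` since `f` is monotone, and `d → 1` gives `f x ≤ x / (1 - x)`. The lower bound is
the mirror image, with `e → d = 0` and `c → -1`.
-/

open Matrix Filter Set
open scoped ComplexOrder Topology

theorem slope_mul_sub (f : ℝ → ℝ) (a b : ℝ) : slope f a b * (b - a) = f b - f a := by
  rw [mul_comm, ← smul_eq_mul, sub_smul_slope, vsub_eq_sub]

theorem cfc_eq_affine_of_spectrum_subset_pair {A : Type*} [TopologicalSpace A] [Ring A]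
    [StarRing A] [Algebra ℝ A] [ContinuousFunctionalCalculus ℝ A IsSelfAdjoint]
    {T : A} (hT : IsSelfAdjoint T) {l m : ℝ} (hspec : spectrum ℝ T ⊆ {l, m}) (f : ℝ → ℝ) :
    cfc f T = slope f l m • T + algebraMap ℝ A (f l - slope f l m * l) := by
  have h1 : cfc f T = cfc (fun x => slope f l m * x + (f l - slope f l m * l)) T := by
    refine cfc_congr fun x hx => ?_
    rcases hspec hx with rfl | rfl
    · ring
    · linear_combination -slope_mul_sub f l x
  rw [h1, cfc_add_const _ _ _ (by fun_prop) hT, cfc_const_mul_id _ _ hT]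

theorem ContinuousWithinAt.tendsto_slope {f : ℝ → ℝ} {s : Set ℝ} {p c : ℝ}
    (hf : ContinuousWithinAt f s p) (hc : p ≠ c) :
    Tendsto (slope f c) (𝓝[s] p) (𝓝 (slope f c p)) := by
  rw [slope_fun_def_field]
  exact (hf.sub continuousWithinAt_const).div (continuousWithinAt_id.sub continuousWithinAt_const)
    (sub_ne_zero.mpr hc)

namespace Matrix.IsHermitian

variable {M : Matrix (Fin 2) (Fin 2) ℂ}

theorem trace_fin_two_eq_eigenvalues (hM : M.IsHermitian) :
    M.trace = ((hM.eigenvalues 0 + hM.eigenvalues 1 : ℝ) : ℂ) := by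
  rw [hM.trace_eq_sum_eigenvalues, Fin.sum_univ_two]
  norm_cast

theorem det_fin_two_eq_eigenvalues (hM : M.IsHermitian) :
    M.det = ((hM.eigenvalues 0 * hM.eigenvalues 1 : ℝ) : ℂ) := by
  rw [hM.det_eq_prod_eigenvalues, Fin.prod_univ_two]
  norm_cast

theorem posSemidef_of_trace_nonneg_of_det_nonneg (hM : M.IsHermitian) {t d : ℝ}
    (htr : M.trace = t) (hdet : M.det = d) (ht : 0 ≤ t) (hd : 0 ≤ d) : M.PosSemidef := by
  rw [hM.trace_fin_two_eq_eigenvalues, Complex.ofReal_inj] at htr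
  rw [hM.det_fin_two_eq_eigenvalues, Complex.ofReal_inj] at hdet
  rw [hM.posSemidef_iff_eigenvalues_nonneg, Pi.le_def, Fin.forall_fin_two, Pi.zero_apply,
    Pi.zero_apply]
  exact ⟨by nlinarith, by nlinarith⟩

theorem spectrum_subset_of_trace_of_det (hM : M.IsHermitian) {l m : ℝ}
    (htr : M.trace = ((l + m : ℝ) : ℂ)) (hdet : M.det = ((l * m : ℝ) : ℂ)) :
    spectrum ℝ M ⊆ {l, m} := by
  rw [hM.trace_fin_two_eq_eigenvalues, Complex.ofReal_inj] at htr
  rw [hM.det_fin_two_eq_eigenvalues, Complex.ofReal_inj] at hdet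
  rw [hM.spectrum_real_eq_range_eigenvalues]
  have hroot : ∀ i, (hM.eigenvalues i - l) * (hM.eigenvalues i - m) = 0 :=
    Fin.forall_fin_two.mpr ⟨by linear_combination hM.eigenvalues 0 * htr - hdet,
      by linear_combination hM.eigenvalues 1 * htr - hdet⟩
  rintro _ ⟨i, rfl⟩
  rcases mul_eq_zero.mp (hroot i) with h | h
  · exact .inl (sub_eq_zero.mp h)
  · exact .inr (sub_eq_zero.mp h)

end Matrix.IsHermitian

def realSymmMatrix (p r q : ℝ) : Matrix (Fin 2) (Fin 2) ℂ := !![(p : ℂ), r; r, q]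

namespace realSymmMatrix

theorem isHermitian (p r q : ℝ) : (realSymmMatrix p r q).IsHermitian := by
  ext i j
  fin_cases i <;> fin_cases j <;> simp [realSymmMatrix]

theorem trace (p r q : ℝ) : (realSymmMatrix p r q).trace = ((p + q : ℝ) : ℂ) := by
  simp [realSymmMatrix, Matrix.trace_fin_two]

theorem det (p r q : ℝ) : (realSymmMatrix p r q).det = ((p * q - r ^ 2 : ℝ) : ℂ) := by
  simp [realSymmMatrix, Matrix.det_fin_two]
  ring

theorem sub (p r q p' r' q' : ℝ) :
    realSymmMatrix p r q - realSymmMatrix p' r' q' = realSymmMatrix (p - p') (r - r') (q - q') := by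
  ext i j
  fin_cases i <;> fin_cases j <;> simp [realSymmMatrix]

theorem smul_add_algebraMap (c k p r q : ℝ) :
    c • realSymmMatrix p r q + algebraMap ℝ _ k =
      realSymmMatrix (c * p + k) (c * r) (c * q + k) := by
  ext i j
  fin_cases i <;> fin_cases j <;> simp [realSymmMatrix, Matrix.algebraMap_matrix_apply]

theorem spectrum_subset {p r q l m : ℝ} (htr : p + q = l + m) (hdet : p * q - r ^ 2 = l * m) :
    spectrum ℝ (realSymmMatrix p r q) ⊆ {l, m} :=
  (isHermitian p r q).spectrum_subset_of_trace_of_det (by rw [trace, htr]) (by rw [det, hdet])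

theorem posSemidef {p r q : ℝ} (htr : 0 ≤ p + q) (hdet : r ^ 2 ≤ p * q) :
    (realSymmMatrix p r q).PosSemidef :=
  (isHermitian p r q).posSemidef_of_trace_nonneg_of_det_nonneg (trace p r q) (det p r q) htr
    (sub_nonneg.mpr hdet)

theorem sq_le_mul_of_posSemidef {p r q : ℝ} (h : (realSymmMatrix p r q).PosSemidef) :
    r ^ 2 ≤ p * q := by
  have := h.det_nonneg
  rw [det, Complex.zero_le_real] at this
  linarith

theorem cfc_eq {p r q l m : ℝ} (htr : p + q = l + m) (hdet : p * q - r ^ 2 = l * m) (f : ℝ → ℝ) :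
    cfc f (realSymmMatrix p r q) = realSymmMatrix (f l + slope f l m * (p - l))
      (slope f l m * r) (f l + slope f l m * (q - l)) := by
  rw [cfc_eq_affine_of_spectrum_subset_pair (isHermitian p r q) (spectrum_subset htr hdet),
    smul_add_algebraMap]
  congr 1 <;> ring

end realSymmMatrix

def IsMatrixMonotoneOn (n : ℕ) (f : ℝ → ℝ) (I : Set ℝ) : Prop :=
  ∀ (A B : Matrix (Fin n) (Fin n) ℂ) (hA : A.IsHermitian) (hB : B.IsHermitian),
    spectrum ℝ A ⊆ I → spectrum ℝ B ⊆ I → (B - A).PosSemidef → (hB.cfc f - hA.cfc f).PosSemidef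

namespace IsMatrixMonotoneOn

variable {f : ℝ → ℝ} {I : Set ℝ}

theorem monotoneOn {n : ℕ} [NeZero n] (hf : IsMatrixMonotoneOn n f I) : MonotoneOn f I := by
  intro x hx y hy hxy
  have hscalar (c : ℝ) : (algebraMap ℝ (Matrix (Fin n) (Fin n) ℂ) c).IsHermitian :=
    IsSelfAdjoint.algebraMap _ (.all c)
  have hspec (c : ℝ) (hc : c ∈ I) :
      spectrum ℝ (algebraMap ℝ (Matrix (Fin n) (Fin n) ℂ) c) ⊆ I := by
    rwa [spectrum.scalar_eq, singleton_subset_iff]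
  have hpsd := hf _ _ (hscalar x) (hscalar y) (hspec x hx) (hspec y hy) (by
    rw [← map_sub, Matrix.algebraMap_eq_diagonal]
    exact posSemidef_diagonal_iff.mpr fun _ => by simpa using hxy)
  rw [← IsHermitian.cfc_eq, ← IsHermitian.cfc_eq, cfc_algebraMap, cfc_algebraMap,
    ← map_sub] at hpsd
  simpa [Matrix.algebraMap_matrix_apply] using hpsd.diag_nonneg (i := 0)

theorem slope_mul_slope_le (hf : IsMatrixMonotoneOn 2 f I) {a b e d : ℝ} (ha : a ∈ I) (hb : b ∈ I)
    (he : e ∈ I) (hd : d ∈ I) (hab : a < b) (hbe : b ≤ e) (hed : e < d) :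
    slope f a e * slope f b d ≤ slope f a b * slope f e d := by
  have hea : 0 < e - a := by linarith
  -- `B = diag(a, e) + w wᵀ` with `w = (√u, √v)` has trace `b + d` and determinant `b d`.
  obtain ⟨u, hu, hu0⟩ : ∃ u, u * (e - a) = (b - a) * (d - a) ∧ 0 ≤ u :=
    ⟨_, div_mul_cancel₀ _ hea.ne', div_nonneg (mul_nonneg (by linarith) (by linarith)) hea.le⟩
  obtain ⟨v, hv, hv0⟩ : ∃ v, v * (e - a) = (e - b) * (d - e) ∧ 0 ≤ v :=
    ⟨_, div_mul_cancel₀ _ hea.ne', div_nonneg (mul_nonneg (by linarith) (by linarith)) hea.le⟩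
  obtain ⟨r, hr⟩ : ∃ r, r ^ 2 = u * v :=
    ⟨√u * √v, by rw [mul_pow, Real.sq_sqrt hu0, Real.sq_sqrt hv0]⟩
  have htrB : a + u + (e + v) = b + d := by
    refine mul_right_cancel₀ hea.ne' ?_
    linear_combination hu + hv
  have hdetB : (a + u) * (e + v) - r ^ 2 = b * d := by
    refine mul_right_cancel₀ hea.ne' ?_
    linear_combination a * hv + e * hu - (e - a) * hr
  have hBA : (realSymmMatrix (a + u) r (e + v) - realSymmMatrix a 0 e).PosSemidef := by
    rw [realSymmMatrix.sub]
    exact realSymmMatrix.posSemidef (by linarith)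
      (by simp only [sub_zero, add_sub_cancel_left, hr, le_refl])
  have hpsd := hf _ _ (realSymmMatrix.isHermitian ..) (realSymmMatrix.isHermitian ..)
    ((realSymmMatrix.spectrum_subset (by ring) (by ring)).trans (pair_subset ha he))
    ((realSymmMatrix.spectrum_subset htrB hdetB).trans (pair_subset hb hd)) hBA
  rw [← IsHermitian.cfc_eq, ← IsHermitian.cfc_eq, realSymmMatrix.cfc_eq htrB hdetB,
    realSymmMatrix.cfc_eq (l := a) (m := e) (by ring) (by ring), realSymmMatrix.sub] at hpsd
  have hE := realSymmMatrix.sq_le_mul_of_posSemidef hpsd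
  rw [sub_self, mul_zero, add_zero, slope_mul_sub, add_sub_cancel, sub_zero] at hE
  have hα := slope_mul_sub f b d
  set α := slope f b d
  rw [slope_def_field f a e, slope_def_field f a b, slope_def_field f e d, div_mul_eq_mul_div,
    div_mul_div_comm, div_le_div_iff₀ hea (mul_pos (by linarith) (by linarith))]
  -- the two sides differ by `(e - a) · det (f B - f A)`
  linear_combination (e - a) * hE + α * (f b - f e + α * (e - b)) * hu
    + α * (f b - f a + α * (a - b)) * hv - α ^ 2 * (e - a) * hr + (f b - f a) * (e - a) * hα

theorem slope_mul_slope_le_of_hasDerivWithinAt_Ioi (hf : IsMatrixMonotoneOn 2 f I)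
    (hI : I.OrdConnected) {f' p e d : ℝ} (hderiv : HasDerivWithinAt f f' (Ioi p) p) (hp : p ∈ I)
    (hd : d ∈ I) (hpe : p < e) (hed : e < d) :
    slope f p e * slope f p d ≤ f' * slope f e d := by
  have hmem {x : ℝ} (h1 : p ≤ x) (h2 : x ≤ d) : x ∈ I := hI.out hp hd ⟨h1, h2⟩
  have hfour : ∀ b ∈ Ioc p e, slope f p e * slope f b d ≤ slope f p b * slope f e d :=
    fun b hb => hf.slope_mul_slope_le hp (hmem hb.1.le (by linarith [hb.2]))
      (hmem hpe.le hed.le) hd hb.1 hb.2 hed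
  have hslope_d : Tendsto (fun b => slope f b d) (𝓝[>] p) (𝓝 (slope f p d)) := by
    simpa only [slope_comm f _ d] using
      hderiv.continuousWithinAt.tendsto_slope (hpe.trans hed).ne
  exact le_of_tendsto_of_tendsto (hslope_d.const_mul _)
    (((hasDerivWithinAt_iff_tendsto_slope' self_notMem_Ioi).mp hderiv).mul_const _)
    (eventually_of_mem (Ioc_mem_nhdsGT hpe) hfour)

theorem slope_mul_slope_le_of_hasDerivWithinAt_Iio (hf : IsMatrixMonotoneOn 2 f I)
    (hI : I.OrdConnected) {f' c x p : ℝ} (hderiv : HasDerivWithinAt f f' (Iio p) p) (hc : c ∈ I)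
    (hp : p ∈ I) (hcx : c < x) (hxp : x < p) :
    slope f c p * slope f x p ≤ slope f c x * f' := by
  have hmem {y : ℝ} (h1 : c ≤ y) (h2 : y ≤ p) : y ∈ I := hI.out hc hp ⟨h1, h2⟩
  have hfour : ∀ e ∈ Ico x p, slope f c e * slope f x p ≤ slope f c x * slope f e p :=
    fun e he => hf.slope_mul_slope_le hc (hmem hcx.le hxp.le)
      (hmem (by linarith [he.1]) he.2.le) hp hcx he.1 he.2
  have hslope_p : Tendsto (fun e => slope f e p) (𝓝[<] p) (𝓝 f') := by
    simpa only [slope_comm f _ p] using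
      (hasDerivWithinAt_iff_tendsto_slope' self_notMem_Iio).mp hderiv
  exact le_of_tendsto_of_tendsto
    ((hderiv.continuousWithinAt.tendsto_slope (hcx.trans hxp).ne').mul_const _)
    (hslope_p.const_mul _) (eventually_of_mem (Ico_mem_nhdsLT hxp) hfour)

theorem apply_mul_sub_le_of_pos (hf : IsMatrixMonotoneOn 2 f I) (hI : I.OrdConnected) (h0 : 0 ∈ I)
    (hf0 : f 0 = 0) (hderiv : HasDerivWithinAt f 1 (Ioi 0) 0) {x d : ℝ} (hd : d ∈ I)
    (hx : 0 < x) (hxd : x < d) : f x * (d - x) ≤ d * x := by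
  have hxI : x ∈ I := hI.out h0 hd ⟨hx.le, hxd.le⟩
  have hfx : 0 ≤ f x := hf0 ▸ hf.monotoneOn h0 hxI hx.le
  have hfxd : f x ≤ f d := hf.monotoneOn hxI hd hxd.le
  have key := hf.slope_mul_slope_le_of_hasDerivWithinAt_Ioi hI hderiv h0 hd hx hxd
  rw [slope_def_field, slope_def_field, slope_def_field, hf0, one_mul, div_mul_div_comm,
    div_le_div_iff₀ (mul_pos (by linarith) (by linarith)) (by linarith)] at key
  rcases hfx.eq_or_lt with hfx0 | hfx
  · rw [← hfx0]; nlinarith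
  · refine le_of_mul_le_mul_left ?_ (hfx.trans_le hfxd)
    nlinarith [mul_pos hfx (mul_pos hx (hx.trans hxd))]

theorem apply_mul_sub_le_of_neg (hf : IsMatrixMonotoneOn 2 f I) (hI : I.OrdConnected) (h0 : 0 ∈ I)
    (hf0 : f 0 = 0) (hderiv : HasDerivWithinAt f 1 (Iio 0) 0) {x c : ℝ} (hc : c ∈ I)
    (hx : x < 0) (hcx : c < x) : f x * (c - x) ≤ c * x := by
  have hxI : x ∈ I := hI.out hc h0 ⟨hcx.le, hx.le⟩
  have hfx : f x ≤ 0 := hf0 ▸ hf.monotoneOn hxI h0 hx.le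
  have hfcx : f c ≤ f x := hf.monotoneOn hc hxI hcx.le
  have key := hf.slope_mul_slope_le_of_hasDerivWithinAt_Iio hI hderiv hc h0 hcx hx
  rw [slope_def_field, slope_def_field, slope_def_field, hf0, mul_one, div_mul_div_comm,
    div_le_div_iff₀ (mul_pos (by linarith) (by linarith)) (by linarith)] at key
  rcases hfx.eq_or_lt with hfx0 | hfx
  · rw [hfx0]; nlinarith
  · refine le_of_mul_le_mul_left ?_ (neg_pos.mpr (hfcx.trans_lt hfx))
    nlinarith [mul_pos (neg_pos.mpr hfx) (mul_pos_of_neg_of_neg (hcx.trans hx) hx)]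

end IsMatrixMonotoneOn

/-- If `f` is a C¹ operator monotone function on `(-1,1)` with `f 0 = 0` and `f' 0 = 1`,
then `f x ≤ x/(1-x)` on `[0,1)` and `f x ≥ x/(1+x)` on `(-1,0]`. -/
theorem operator_monotone_normalized_bounds (f : ℝ → ℝ)
    (hC1 : ContDiffOn ℝ 1 f (Set.Ioo (-1:ℝ) 1))
    (hmono : ∀ (n : ℕ) (A B : Matrix (Fin n) (Fin n) ℂ)
      (hA : A.IsHermitian) (hB : B.IsHermitian),
      spectrum ℝ A ⊆ Set.Ioo (-1:ℝ) 1 → spectrum ℝ B ⊆ Set.Ioo (-1:ℝ) 1 →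
      (B - A).PosSemidef → (hB.cfc f - hA.cfc f).PosSemidef)
    (hf0 : f 0 = 0) (hf'0 : deriv f 0 = 1) :
    (∀ x ∈ Set.Ico (0:ℝ) 1, f x ≤ x / (1 - x)) ∧
    (∀ x ∈ Set.Ioc (-1:ℝ) 0, x / (1 + x) ≤ f x) := by
  have hf : IsMatrixMonotoneOn 2 f (Ioo (-1) 1) := hmono 2
  have h0 : (0 : ℝ) ∈ Ioo (-1) 1 := by norm_num
  have hderiv : HasDerivAt f 1 0 := hf'0 ▸ ((hC1.differentiableOn one_ne_zero).differentiableAt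
    (Ioo_mem_nhds (by norm_num) (by norm_num))).hasDerivAt
  constructor
  · rintro x ⟨hx0, hx1⟩
    rcases hx0.eq_or_lt with rfl | hx0
    · simp [hf0]
    have hbound : ∀ d ∈ Ioo x 1, f x * (d - x) ≤ d * x := fun d hd =>
      hf.apply_mul_sub_le_of_pos ordConnected_Ioo h0 hf0 hderiv.hasDerivWithinAt
        ⟨by linarith [hd.1], hd.2⟩ hx0 hd.1
    have hlim := le_on_closure hbound (by fun_prop) (by fun_prop)
      (by rw [closure_Ioo hx1.ne]; exact right_mem_Icc.mpr hx1.le)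
    rw [le_div_iff₀ (by linarith)]
    linarith
  · rintro x ⟨hx0, hx1⟩
    rcases hx1.eq_or_lt with rfl | hx1
    · simp [hf0]
    have hbound : ∀ c ∈ Ioo (-1) x, f x * (c - x) ≤ c * x := fun c hc =>
      hf.apply_mul_sub_le_of_neg ordConnected_Ioo h0 hf0 hderiv.hasDerivWithinAt
        ⟨hc.1, by linarith [hc.2]⟩ hx1 hc.2
    have hlim := le_on_closure hbound (by fun_prop) (by fun_prop)
      (by rw [closure_Ioo hx0.ne]; exact left_mem_Icc.mpr hx0.le)
    rw [div_le_iff₀ (by linarith)]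
    linarith
end
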